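/- arXiv:1912.10422 — 2 statements merged into one kernel-verified Lean document; each statement's English description precedes it below -/
import Mathlib

section
/- Let c : ℕ × ℕ → ℚ satisfy c(g,k) = 0 whenever g = 0 or k > g. In the formal power series ring ℚ[[x,y]], set h = Σ_{g,k} c(g,k) x^g y^k, and let u ∈ ℚ[[x,y]] be the series whose coefficient of x^g y^k is c(g,k-1)/(5g-2-k) for k ≥ 1 and 0 for k = 0 (note that whenever c(g,k-1) ≠ 0 one has g ≥ 1 and k-1 ≤ g, so 5g-2-k ≥ 4g-3 > 0). Let G and K denote the derivations x·∂/∂x and y·∂/∂y on ℚ[[x,y]]. Then the equation h = (G - K + 1)(u) + (1/12)·(5G - K - 4)((5G - K - 6)(x·h)) + (1/2)·h² + x/12 holds in ℚ[[x,y]] if and only if c(1,0) = 1/12 and, for every pair (g,k) with g ≥ 1, 0 ≤ k ≤ g and (g,k) ≠ (1,0), one has c(g,k) = ((g+1-k)/(5g-2-k))·c(g,k-1) + ((5g-6-k)(5g-4-k)/12)·c(g-1,k) + (1/2)·Σ_{g₁+g₂=g, k₁+k₂=k} c(g₁,k₁)·c(g₂,k₂), where c(g,-1) is interpreted as 0 and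 the sum ranges over all ordered pairs of pairs of nonnegative integers with the indicated sums. -/
open MvPowerSeries

namespace KPAux

noncomputable def D (g k : ℕ) : Fin 2 →₀ ℕ := Finsupp.single 0 g + Finsupp.single 1 k

@[simp] lemma D0 (g k : ℕ) : D g k 0 = g := by simp [D]
@[simp] lemma D1 (g k : ℕ) : D g k 1 = k := by simp [D]

lemma D_surj (d : Fin 2 →₀ ℕ) : d = D (d 0) (d 1) := by
  ext i; fin_cases i <;> simp [D]

lemma D_add (a b p q : ℕ) : D a p + D b q = D (a + b) (p + q) := by
  ext i; fin_cases i <;> simp [D]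

lemma D_eq_iff {g k g' k' : ℕ} : D g k = D g' k' ↔ g = g' ∧ k = k' := by
  constructor
  · intro hEq
    exact ⟨by rw [← D0 g k, hEq, D0], by rw [← D1 g k, hEq, D1]⟩
  · rintro ⟨rfl, rfl⟩; rfl

lemma single_le_D {g k : ℕ} : (Finsupp.single 0 1 : Fin 2 →₀ ℕ) ≤ D g k ↔ 1 ≤ g := by
  rw [Finsupp.single_le_iff]; simp

lemma single_eq_D10 : (Finsupp.single 0 1 : Fin 2 →₀ ℕ) = D 1 0 := by
  ext i; fin_cases i <;> simp [D]

lemma D_sub {g k : ℕ} : D g k - Finsupp.single 0 1 = D (g - 1) k := by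
  ext i; fin_cases i <;> simp [D, Finsupp.tsub_apply]

lemma coeff_mul_D (F₁ F₂ : MvPowerSeries (Fin 2) ℚ) (g k : ℕ) :
    MvPowerSeries.coeff (D g k) (F₁ * F₂) =
      ∑ p ∈ Finset.HasAntidiagonal.antidiagonal g, ∑ q ∈ Finset.HasAntidiagonal.antidiagonal k,
        MvPowerSeries.coeff (D p.1 q.1) F₁ * MvPowerSeries.coeff (D p.2 q.2) F₂ := by
  rw [MvPowerSeries.coeff_mul, ← Finset.sum_product']
  refine Finset.sum_nbij' (fun e => ((e.1 0, e.2 0), (e.1 1, e.2 1)))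
    (fun x => (D x.1.1 x.2.1, D x.1.2 x.2.2)) ?_ ?_ ?_ ?_ ?_
  · intro a ha
    rw [Finset.HasAntidiagonal.mem_antidiagonal] at ha
    simp only [Finset.mem_product, Finset.HasAntidiagonal.mem_antidiagonal]
    constructor
    · simpa using congrArg (fun f : Fin 2 →₀ ℕ => f 0) ha
    · simpa using congrArg (fun f : Fin 2 →₀ ℕ => f 1) ha
  · intro x hx
    simp only [Finset.mem_product, Finset.HasAntidiagonal.mem_antidiagonal] at hx
    rw [Finset.HasAntidiagonal.mem_antidiagonal, D_add, hx.1, hx.2]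
  · intro a _
    exact Prod.ext (D_surj a.1).symm (D_surj a.2).symm
  · intro x _
    simp
  · intro a _
    rw [← D_surj a.1, ← D_surj a.2]

def Efun (c : ℕ × ℕ → ℚ) (g k : ℕ) : ℚ :=
  ((g : ℚ) - (k : ℚ) + 1) *
      (if k = 0 then 0 else c (g, k - 1) / (5 * (g : ℚ) - 2 - (k : ℚ)))
  + (1/12) * ((5 * (g : ℚ) - (k : ℚ) - 4) * ((5 * (g : ℚ) - (k : ℚ) - 6) *
      (if g = 0 then 0 else c (g - 1, k))))
  + (1/2) * (∑ p ∈ Finset.HasAntidiagonal.antidiagonal g, ∑ q ∈ Finset.HasAntidiagonal.antidiagonal k,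
      c (p.1, q.1) * c (p.2, q.2))
  + (if g = 1 ∧ k = 0 then 1/12 else 0)

lemma Efun_match (c : ℕ × ℕ → ℚ) (g k : ℕ) (hg : 1 ≤ g) (hne : ¬(g = 1 ∧ k = 0)) :
    Efun c g k =
      (if k = 0 then 0
        else (((g : ℚ) + 1 - (k : ℚ)) / (5 * (g : ℚ) - 2 - (k : ℚ))) * c (g, k - 1))
      + ((5 * (g : ℚ) - 6 - (k : ℚ)) * (5 * (g : ℚ) - 4 - (k : ℚ)) / 12) * c (g - 1, k)
      + (1/2) * ∑ p ∈ Finset.HasAntidiagonal.antidiagonal g, ∑ q ∈ Finset.HasAntidiagonal.antidiagonal k,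
          c (p.1, q.1) * c (p.2, q.2) := by
  unfold Efun
  rw [if_neg hne, if_neg (by omega : ¬ g = 0)]
  by_cases hk : k = 0
  · rw [if_pos hk, if_pos hk]; ring
  · rw [if_neg hk, if_neg hk]; ring

lemma Efun_zero0 (c : ℕ × ℕ → ℚ) (hc0 : ∀ g k : ℕ, g = 0 ∨ g < k → c (g, k) = 0)
    (k : ℕ) : Efun c 0 k = 0 := by
  have h0 : ∀ m, c (0, m) = 0 := fun m => hc0 0 m (Or.inl rfl)
  have ht3 : (∑ p ∈ Finset.HasAntidiagonal.antidiagonal 0, ∑ q ∈ Finset.HasAntidiagonal.antidiagonal k,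
      c (p.1, q.1) * c (p.2, q.2)) = 0 := by
    apply Finset.sum_eq_zero; intro p hp
    apply Finset.sum_eq_zero; intro q hq
    rw [Finset.HasAntidiagonal.mem_antidiagonal] at hp
    rw [show p.1 = 0 by omega, h0, zero_mul]
  unfold Efun
  rw [ht3, if_pos rfl, if_neg (by omega : ¬((0:ℕ) = 1 ∧ k = 0))]
  by_cases hk : k = 0
  · rw [if_pos hk]; ring
  · rw [if_neg hk, h0, zero_div]; ring

lemma Efun_zero_lt (c : ℕ × ℕ → ℚ) (hc0 : ∀ g k : ℕ, g = 0 ∨ g < k → c (g, k) = 0)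
    (g k : ℕ) (hg : 1 ≤ g) (hlt : g < k) : Efun c g k = 0 := by
  have hk0 : ¬ k = 0 := by omega
  have ht2 : c (g - 1, k) = 0 := hc0 _ _ (Or.inr (by omega))
  have ht3 : (∑ p ∈ Finset.HasAntidiagonal.antidiagonal g, ∑ q ∈ Finset.HasAntidiagonal.antidiagonal k,
      c (p.1, q.1) * c (p.2, q.2)) = 0 := by
    apply Finset.sum_eq_zero; intro p hp
    apply Finset.sum_eq_zero; intro q hq
    rw [Finset.HasAntidiagonal.mem_antidiagonal] at hp hq
    rcases lt_or_ge p.1 q.1 with h1 | h1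
    · rw [hc0 _ _ (Or.inr h1), zero_mul]
    · rw [hc0 p.2 q.2 (Or.inr (by omega)), mul_zero]
  have ht1 : ((g : ℚ) - (k : ℚ) + 1) *
      (if k = 0 then 0 else c (g, k - 1) / (5 * (g : ℚ) - 2 - (k : ℚ))) = 0 := by
    rw [if_neg hk0]
    rcases eq_or_ne k (g + 1) with rfl | hk1
    · have : ((g : ℚ) - ((g + 1 : ℕ) : ℚ) + 1) = 0 := by push_cast; ring
      rw [this, zero_mul]
    · rw [hc0 g (k - 1) (Or.inr (by omega)), zero_div, mul_zero]
  unfold Efun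
  rw [ht1, ht2, ht3, if_neg (by omega : ¬(g = 1 ∧ k = 0)),
    if_neg (by omega : ¬ g = 0)]
  ring

lemma Efun_10 (c : ℕ × ℕ → ℚ) (hc0 : ∀ g k : ℕ, g = 0 ∨ g < k → c (g, k) = 0) :
    Efun c 1 0 = 1/12 := by
  have h0 : ∀ m, c (0, m) = 0 := fun m => hc0 0 m (Or.inl rfl)
  have ht3 : (∑ p ∈ Finset.HasAntidiagonal.antidiagonal 1, ∑ q ∈ Finset.HasAntidiagonal.antidiagonal 0,
      c (p.1, q.1) * c (p.2, q.2)) = 0 := by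
    apply Finset.sum_eq_zero; intro p hp
    apply Finset.sum_eq_zero; intro q hq
    rw [Finset.HasAntidiagonal.mem_antidiagonal] at hp
    rcases Nat.eq_zero_or_pos p.1 with h | h
    · rw [h, h0, zero_mul]
    · rw [show p.2 = 0 by omega, h0, mul_zero]
  unfold Efun
  rw [ht3]
  have h00 : c 0 = 0 := h0 0
  norm_num [h0, h00]

end KPAux

theorem kp_recursion_iff
    (c : ℕ × ℕ → ℚ)
    (hc0 : ∀ g k : ℕ, g = 0 ∨ g < k → c (g, k) = 0)
    (h u : MvPowerSeries (Fin 2) ℚ)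
    (hh : ∀ d : Fin 2 →₀ ℕ, MvPowerSeries.coeff d h = c (d 0, d 1))
    (hu : ∀ d : Fin 2 →₀ ℕ, MvPowerSeries.coeff d u =
      if d 1 = 0 then 0
      else c (d 0, d 1 - 1) / (5 * (d 0 : ℚ) - 2 - (d 1 : ℚ)))
    (G K : MvPowerSeries (Fin 2) ℚ → MvPowerSeries (Fin 2) ℚ)
    (hG : ∀ (F : MvPowerSeries (Fin 2) ℚ) (d : Fin 2 →₀ ℕ),
      MvPowerSeries.coeff d (G F) = (d 0 : ℚ) * MvPowerSeries.coeff d F)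
    (hK : ∀ (F : MvPowerSeries (Fin 2) ℚ) (d : Fin 2 →₀ ℕ),
      MvPowerSeries.coeff d (K F) = (d 1 : ℚ) * MvPowerSeries.coeff d F) :
    (h = (G u - K u + u)
        + (1/12 : ℚ) •
          ((5 : ℚ) • G ((5 : ℚ) • G (MvPowerSeries.X 0 * h) - K (MvPowerSeries.X 0 * h)
              - (6 : ℚ) • (MvPowerSeries.X 0 * h))
            - K ((5 : ℚ) • G (MvPowerSeries.X 0 * h) - K (MvPowerSeries.X 0 * h)
              - (6 : ℚ) • (MvPowerSeries.X 0 * h))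
            - (4 : ℚ) • ((5 : ℚ) • G (MvPowerSeries.X 0 * h) - K (MvPowerSeries.X 0 * h)
              - (6 : ℚ) • (MvPowerSeries.X 0 * h)))
        + (1/2 : ℚ) • h ^ 2 + (1/12 : ℚ) • MvPowerSeries.X 0)
    ↔ (c (1, 0) = 1/12 ∧ ∀ g k : ℕ, 1 ≤ g → k ≤ g → (g, k) ≠ (1, 0) →
        c (g, k) =
          (if k = 0 then 0
            else (((g : ℚ) + 1 - (k : ℚ)) / (5 * (g : ℚ) - 2 - (k : ℚ))) * c (g, k - 1))
          + ((5 * (g : ℚ) - 6 - (k : ℚ)) * (5 * (g : ℚ) - 4 - (k : ℚ)) / 12) * c (g - 1, k)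
          + (1/2) * ∑ p ∈ Finset.HasAntidiagonal.antidiagonal g, ∑ q ∈ Finset.HasAntidiagonal.antidiagonal k,
              c (p.1, q.1) * c (p.2, q.2)) := by
  have hXh : ∀ g k : ℕ, MvPowerSeries.coeff (KPAux.D g k) (MvPowerSeries.X 0 * h)
      = if g = 0 then 0 else c (g - 1, k) := by
    intro g k
    rw [show (MvPowerSeries.X 0 : MvPowerSeries (Fin 2) ℚ)
        = MvPowerSeries.monomial (Finsupp.single 0 1) 1 from rfl,
      MvPowerSeries.coeff_monomial_mul]
    by_cases hg : g = 0
    · subst hg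
      rw [if_neg (by rw [KPAux.single_le_D]; omega), if_pos rfl]
    · rw [if_pos (KPAux.single_le_D.mpr (by omega)), KPAux.D_sub, hh, one_mul,
        if_neg hg, KPAux.D0, KPAux.D1]
  have hX : ∀ g k : ℕ, MvPowerSeries.coeff (KPAux.D g k) (MvPowerSeries.X 0 : MvPowerSeries (Fin 2) ℚ)
      = if g = 1 ∧ k = 0 then 1 else 0 := by
    intro g k
    rw [show (MvPowerSeries.X 0 : MvPowerSeries (Fin 2) ℚ)
        = MvPowerSeries.monomial (Finsupp.single 0 1) 1 from rfl,
      MvPowerSeries.coeff_monomial, KPAux.single_eq_D10]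
    by_cases hcnd : g = 1 ∧ k = 0
    · rw [if_pos (KPAux.D_eq_iff.mpr hcnd), if_pos hcnd]
    · rw [if_neg (fun hq => hcnd (KPAux.D_eq_iff.mp hq)), if_neg hcnd]
  have hsq : ∀ g k : ℕ, MvPowerSeries.coeff (KPAux.D g k) (h ^ 2)
      = ∑ p ∈ Finset.HasAntidiagonal.antidiagonal g, ∑ q ∈ Finset.HasAntidiagonal.antidiagonal k,
          c (p.1, q.1) * c (p.2, q.2) := by
    intro g k
    rw [sq, KPAux.coeff_mul_D]
    refine Finset.sum_congr rfl fun p _ => Finset.sum_congr rfl fun q _ => ?_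
    rw [hh, hh, KPAux.D0, KPAux.D1, KPAux.D0, KPAux.D1]
  have key : ∀ g k : ℕ, MvPowerSeries.coeff (KPAux.D g k)
      ((G u - K u + u)
        + (1/12 : ℚ) •
          ((5 : ℚ) • G ((5 : ℚ) • G (MvPowerSeries.X 0 * h) - K (MvPowerSeries.X 0 * h)
              - (6 : ℚ) • (MvPowerSeries.X 0 * h))
            - K ((5 : ℚ) • G (MvPowerSeries.X 0 * h) - K (MvPowerSeries.X 0 * h)
              - (6 : ℚ) • (MvPowerSeries.X 0 * h))
            - (4 : ℚ) • ((5 : ℚ) • G (MvPowerSeries.X 0 * h) - K (MvPowerSeries.X 0 * h)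
              - (6 : ℚ) • (MvPowerSeries.X 0 * h)))
        + (1/2 : ℚ) • h ^ 2 + (1/12 : ℚ) • MvPowerSeries.X 0)
      = KPAux.Efun c g k := by
    intro g k
    simp only [map_add, map_sub, MvPowerSeries.coeff_smul, hG, hK, hXh, hX, hsq, hu,
      KPAux.D0, KPAux.D1, KPAux.Efun]
    split_ifs <;> first | ring | tauto
  have final : (∀ g k : ℕ, c (g, k) = KPAux.Efun c g k) ↔
      (c (1, 0) = 1/12 ∧ ∀ g k : ℕ, 1 ≤ g → k ≤ g → (g, k) ≠ (1, 0) →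
        c (g, k) =
          (if k = 0 then 0
            else (((g : ℚ) + 1 - (k : ℚ)) / (5 * (g : ℚ) - 2 - (k : ℚ))) * c (g, k - 1))
          + ((5 * (g : ℚ) - 6 - (k : ℚ)) * (5 * (g : ℚ) - 4 - (k : ℚ)) / 12) * c (g - 1, k)
          + (1/2) * ∑ p ∈ Finset.HasAntidiagonal.antidiagonal g, ∑ q ∈ Finset.HasAntidiagonal.antidiagonal k,
              c (p.1, q.1) * c (p.2, q.2)) := by
    constructor
    · intro Hc
      refine ⟨by rw [Hc 1 0, KPAux.Efun_10 c hc0], ?_⟩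
      intro g k hg hk hne
      rw [Hc g k, KPAux.Efun_match c g k hg (by rintro ⟨rfl, rfl⟩; exact hne rfl)]
    · rintro ⟨h10, hrec⟩ g k
      rcases Nat.eq_zero_or_pos g with rfl | hg
      · rw [hc0 _ _ (Or.inl rfl), KPAux.Efun_zero0 c hc0]
      · rcases le_or_gt k g with hk | hk
        · by_cases hne : g = 1 ∧ k = 0
          · rw [hne.1, hne.2, h10, KPAux.Efun_10 c hc0]
          · rw [KPAux.Efun_match c g k hg hne]
            exact hrec g k hg hk (by simpa [Prod.ext_iff] using hne)
        · rw [hc0 _ _ (Or.inr hk), KPAux.Efun_zero_lt c hc0 g k hg hk]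
  rw [MvPowerSeries.ext_iff, ← final]
  constructor
  · intro H g k
    have := H (KPAux.D g k)
    rw [hh, key, KPAux.D0, KPAux.D1] at this
    exact this
  · intro H n
    rw [KPAux.D_surj n, hh, key, KPAux.D0, KPAux.D1]
    exact H _ _
end

section
/- In the polynomial ring ℚ[ε][p₁, p₂, p₃, ...] in a variable ε and countably many variables p_j, define a sequence of polynomials by T₀ = p₁ and T_{k+1} = Σ_{m≥1} m · (p_{m+2} + ε·p_{m+1}) · ∂T_k/∂p_m (the sum is finite since each T_k involves only finitely many of the p_j). Then there exist positive integers a(k,j), defined for 0 ≤ j ≤ k, such that for every k ≥ 0, T_k = Σ_{j=0}^{k} a(k,j) · ε^{k-j} · p_{k+1+j}; in particular T_k is a homogeneous linear form in the variables p_{k+1}, ..., p_{2k+1}. Moreover the a(k,j) satisfy a(0,0) = 1 and a(k+1,j) = (k+j)·a(k,j-1) + (k+1+j)·a(k,j) (with a(k,-1) = a(k,k+1) = 0), and consequently a(k,0) = k! and a(k,k) = (2k-1)!! for all k, where (2k-1)!! is the odd double factorial (with (-1)!! = 1). -/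
open MvPolynomial

abbrev Pq := MvPolynomial ℕ (Polynomial ℚ)

def aCoef : ℕ → ℕ → ℕ
  | 0, j => if j = 0 then 1 else 0
  | (k+1), j => (k + j) * (if j = 0 then 0 else aCoef k (j - 1))
      + (k + 1 + j) * (if j = k + 1 then 0 else aCoef k j)

lemma aCoef_pos : ∀ k j : ℕ, j ≤ k → 0 < aCoef k j := by
  intro k
  induction k with
  | zero => intro j hj; interval_cases j; simp [aCoef]
  | succ k ih =>
    intro j hj
    rcases Nat.eq_zero_or_pos j with rfl | hj0
    · simpa [aCoef] using ih 0 (Nat.zero_le _)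
    · have h1 : 0 < aCoef k (j - 1) := ih (j - 1) (by omega)
      have : 0 < (k + j) * aCoef k (j - 1) := by positivity
      simp only [aCoef, if_neg (by omega : j ≠ 0)]
      omega

lemma aCoef_zero : ∀ k : ℕ, aCoef k 0 = Nat.factorial k := by
  intro k
  induction k with
  | zero => rfl
  | succ k ih => simp [aCoef, ih, Nat.factorial_succ]

lemma aCoef_diag : ∀ k : ℕ, aCoef k k = Nat.doubleFactorial (2 * k - 1) := by
  intro k
  induction k with
  | zero => rfl
  | succ k ih =>
    rcases Nat.eq_zero_or_pos k with rfl | h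
    · simp [aCoef]
    · rw [show 2 * (k + 1) - 1 = (2 * k - 1) + 2 by omega, Nat.doubleFactorial]
      simp only [aCoef, if_neg (by omega : k + 1 ≠ 0), if_pos rfl, mul_zero, add_zero]
      rw [show k + 1 - 1 = k from rfl, ih, show k + (k + 1) = (2 * k - 1) + 2 by omega]
      simp

lemma step (T : ℕ → Pq) (k : ℕ)
    (hTs : T (k + 1) = ∑ᶠ m : ℕ, (m : Pq) *
        (X (m + 2) + C Polynomial.X * X (m + 1)) * pderiv m (T k))
    (hk : T k = ∑ j ∈ Finset.range (k + 1),
        (aCoef k j : Pq) * C (Polynomial.X ^ (k - j)) * X (k + 1 + j)) :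
    T (k + 1) = ∑ j ∈ Finset.range (k + 2),
        (aCoef (k + 1) j : Pq) * C (Polynomial.X ^ (k + 1 - j)) * X (k + 2 + j) := by
  have hcast : ∀ n : ℕ, (n : Pq) = C (n : Polynomial ℚ) := fun n => (map_natCast C n).symm
  have hd : ∀ m : ℕ, pderiv m (T k) = ∑ j ∈ Finset.range (k + 1),
      if m = k + 1 + j then (aCoef k j : Pq) * C (Polynomial.X ^ (k - j)) else 0 := by
    intro m
    rw [hk, map_sum]
    refine Finset.sum_congr rfl fun j _ => ?_
    rw [hcast, ← C_mul, pderiv_C_mul]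
    rcases eq_or_ne m (k + 1 + j) with h | h
    · rw [if_pos h, ← h, pderiv_X_self, mul_one, C_mul, ← hcast]
    · rw [if_neg h, pderiv_X_of_ne (fun hh => h hh.symm), mul_zero]
  rw [hTs]
  have hsupp : Function.support (fun m : ℕ => (m : Pq) *
      (X (m + 2) + C Polynomial.X * X (m + 1)) * pderiv m (T k))
      ⊆ ↑(Finset.range (2 * k + 2)) := by
    intro m hm
    simp only [Finset.coe_range, Set.mem_Iio]
    by_contra h
    apply hm
    have hz : pderiv m (T k) = 0 := by
      rw [hd]
      refine Finset.sum_eq_zero fun j hj => ?_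
      rw [if_neg]
      simp only [Finset.mem_range] at hj
      omega
    simp [hz]
  rw [finsum_eq_sum_of_support_subset _ hsupp]
  have h1 : ∀ m ∈ Finset.range (2 * k + 2), (m : Pq) *
      (X (m + 2) + C Polynomial.X * X (m + 1)) * pderiv m (T k)
      = ∑ j ∈ Finset.range (k + 1), if m = k + 1 + j then
          (m : Pq) * (X (m + 2) + C Polynomial.X * X (m + 1)) *
            ((aCoef k j : Pq) * C (Polynomial.X ^ (k - j))) else 0 := by
    intro m _
    rw [hd, Finset.mul_sum]
    exact Finset.sum_congr rfl fun j _ => by rw [mul_ite, mul_zero]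
  rw [Finset.sum_congr rfl h1, Finset.sum_comm]
  have h2 : ∀ j ∈ Finset.range (k + 1),
      (∑ m ∈ Finset.range (2 * k + 2), if m = k + 1 + j then
        (m : Pq) * (X (m + 2) + C Polynomial.X * X (m + 1)) *
          ((aCoef k j : Pq) * C (Polynomial.X ^ (k - j))) else 0)
      = ((k + 1 + j : ℕ) : Pq) * (X (k + 1 + j + 2) + C Polynomial.X * X (k + 1 + j + 1)) *
          ((aCoef k j : Pq) * C (Polynomial.X ^ (k - j))) := by
    intro j hj
    simp only [Finset.mem_range] at hj
    rw [Finset.sum_ite_eq' (Finset.range (2 * k + 2)) (k + 1 + j), if_pos]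
    simp only [Finset.mem_range]; omega
  rw [Finset.sum_congr rfl h2]
  -- now the RHS side
  have hR : ∀ j : ℕ, (aCoef (k + 1) j : Pq) * C (Polynomial.X ^ (k + 1 - j)) * X (k + 2 + j)
      = (((k + j) * (if j = 0 then 0 else aCoef k (j - 1)) : ℕ) : Pq) *
          C (Polynomial.X ^ (k + 1 - j)) * X (k + 2 + j)
        + (((k + 1 + j) * (if j = k + 1 then 0 else aCoef k j) : ℕ) : Pq) *
          C (Polynomial.X ^ (k + 1 - j)) * X (k + 2 + j) := by
    intro j
    rw [show aCoef (k + 1) j = (k + j) * (if j = 0 then 0 else aCoef k (j - 1))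
        + (k + 1 + j) * (if j = k + 1 then 0 else aCoef k j) from rfl]
    push_cast [apply_ite (Nat.cast : ℕ → Pq)]
    ring
  rw [Finset.sum_congr rfl (fun j _ => hR j), Finset.sum_add_distrib,
    Finset.sum_range_succ' (fun j => (((k + j) * (if j = 0 then 0 else aCoef k (j - 1)) : ℕ) : Pq) *
      C (Polynomial.X ^ (k + 1 - j)) * X (k + 2 + j)) (k + 1),
    Finset.sum_range_succ (fun j => (((k + 1 + j) * (if j = k + 1 then 0 else aCoef k j) : ℕ) : Pq) *
      C (Polynomial.X ^ (k + 1 - j)) * X (k + 2 + j)) (k + 1)]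
  simp only [if_true, mul_zero, Nat.cast_zero, zero_mul, add_zero]
  rw [← Finset.sum_add_distrib]
  refine Finset.sum_congr rfl fun j hj => ?_
  simp only [Finset.mem_range] at hj
  rw [if_neg (by omega : j + 1 ≠ 0), if_neg (by omega : j ≠ k + 1),
    show j + 1 - 1 = j from rfl,
    show k + 1 - (j + 1) = k - j by omega,
    show k + 1 - j = (k - j) + 1 by omega,
    show k + 1 + j + 2 = k + 2 + (j + 1) by omega,
    show k + 1 + j + 1 = k + 2 + j by omega,
    show k + (j + 1) = k + 1 + j by omega,
    pow_succ, C_mul]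
  push_cast
  ring

/-- In `ℚ[ε][p₁, p₂, …]`, realized as `MvPolynomial ℕ (Polynomial ℚ)` with
`ε = C Polynomial.X` and `p_m = X m` (the variable `X 0` is unused), the sequence defined by
`T 0 = p₁` and `T (k+1) = Σ_m m · (p_{m+2} + ε·p_{m+1}) · ∂T_k/∂p_m` (a finite `finsum`;
the `m = 0` term vanishes because of the factor `m`) is a homogeneous linear form
`T k = Σ_{j=0}^{k} a k j · ε^{k-j} · p_{k+1+j}` with positive integer coefficients `a k j`
satisfying `a 0 0 = 1` and the recursion
`a (k+1) j = (k+j)·a k (j-1) + (k+1+j)·a k j` (with `a k (-1) = a k (k+1) = 0`), and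
consequently `a k 0 = k!` and `a k k = (2k-1)‼` (here `(2·0-1)‼ = 0‼ = 1`). -/
theorem Tk_triangular
    (T : ℕ → MvPolynomial ℕ (Polynomial ℚ))
    (hT0 : T 0 = X 1)
    (hTs : ∀ k : ℕ, T (k + 1) =
      ∑ᶠ m : ℕ, (m : MvPolynomial ℕ (Polynomial ℚ)) *
        (X (m + 2) + C Polynomial.X * X (m + 1)) * pderiv m (T k)) :
    ∃ a : ℕ → ℕ → ℕ,
      (∀ k j : ℕ, j ≤ k → 0 < a k j) ∧
      (∀ k : ℕ, T k = ∑ j ∈ Finset.range (k + 1),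
        (a k j : MvPolynomial ℕ (Polynomial ℚ)) * C (Polynomial.X ^ (k - j)) * X (k + 1 + j)) ∧
      a 0 0 = 1 ∧
      (∀ k j : ℕ, j ≤ k + 1 →
        a (k + 1) j = (k + j) * (if j = 0 then 0 else a k (j - 1))
          + (k + 1 + j) * (if j = k + 1 then 0 else a k j)) ∧
      (∀ k : ℕ, a k 0 = Nat.factorial k) ∧
      (∀ k : ℕ, a k k = Nat.doubleFactorial (2 * k - 1)) := by
  refine ⟨aCoef, aCoef_pos, ?_, rfl, fun k j _ => rfl, aCoef_zero, aCoef_diag⟩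
  intro k
  induction k with
  | zero => simpa [aCoef] using hT0
  | succ k ih => exact step T k (hTs k) ih
end
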